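/- Let G be a finite solvable group. If for every prime p every Sylow p-subgroup of G has a basis, then G has a basis. -/

import Mathlib

/-!
Induction on `|G|`. For a prime `p` dividing `|G|`, solvability yields a subgroup `H` whose order
is the `p'`-part of `|G|`: a nontrivial normal `q`-subgroup `N` exists (a Sylow subgroup of the last
nontrivial term of the derived series), `G ⧸ N` has such a subgroup by induction, and its preimage
is one when `q ≠ p`, while for `q = p` the Schur–Zassenhaus theorem splits the preimage over `N`.
A Sylow `p`-subgroup `P` and `H` are complements, and every Sylow subgroup of `H` is trivial or
isomorphic to one of `G`, so `H` has a basis by induction; concatenating bases of `P` and `H`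
gives a basis of `G`.
-/

/-- A sequence `b : Fin n → G` of non-identity elements is a *basis* for the group `G`
if every `g ∈ G` is uniquely of the form `b 0 ^ a 0 * ⋯ * b (n-1) ^ a (n-1)`
with `a i ∈ {0, …, orderOf (b i) - 1}`. -/
def IsGroupBasis {G : Type*} [Group G] {n : ℕ} (b : Fin n → G) : Prop :=
  (∀ i, b i ≠ 1) ∧
    Function.Bijective (fun a : ∀ i, Fin (orderOf (b i)) =>
      (List.ofFn fun i => b i ^ ((a i : ℕ))).prod)

/-- `G` has a basis. -/
def HasGroupBasis (G : Type*) [Group G] : Prop :=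
  ∃ (n : ℕ) (b : Fin n → G), IsGroupBasis b

open Function Subgroup

section Basis

variable {G G' : Type*} [Group G] [Group G'] {m n k : ℕ}

def powProd (b : Fin n → G) (a : ∀ i, Fin (orderOf (b i))) : G :=
  (List.ofFn fun i => b i ^ (a i : ℕ)).prod

theorem powProd_map_of_injective (f : G →* G') (hf : Injective f) (b : Fin n → G) :
    powProd (fun i => f (b i)) =
      f ∘ powProd b ∘ Equiv.piCongrRight fun i => finCongr (orderOf_injective f hf (b i)) := by
  funext a
  simp [powProd, map_list_prod, List.map_ofFn, comp_def]

theorem IsGroupBasis.map_mulEquiv (e : G ≃* G') {b : Fin n → G} (hb : IsGroupBasis b) :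
    IsGroupBasis fun i => e (b i) := by
  refine ⟨fun i => by simpa using hb.1 i, ?_⟩
  change Bijective (powProd fun i => (e : G →* G') (b i))
  rw [powProd_map_of_injective _ fun _ _ h => e.injective h]
  exact e.bijective.comp (hb.2.comp (Equiv.bijective _))

theorem HasGroupBasis.of_mulEquiv (e : G ≃* G') (h : HasGroupBasis G) : HasGroupBasis G' :=
  let ⟨n, _, hb⟩ := h
  ⟨n, _, hb.map_mulEquiv e⟩

theorem hasGroupBasis_of_subsingleton [Subsingleton G] : HasGroupBasis G :=
  ⟨0, finZeroElim, finZeroElim, fun _ _ _ => Subsingleton.elim _ _,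
    fun _ => ⟨finZeroElim, Subsingleton.elim _ _⟩⟩

theorem powProd_eq_comp_sumPiEquivProdPi (d : Fin (m + k) → G) :
    powProd d = (fun p => powProd (d ∘ Fin.castAdd k) p.1 * powProd (d ∘ Fin.natAdd m) p.2) ∘
      ((Equiv.piCongrLeft _ finSumFinEquiv).symm.trans (Equiv.sumPiEquivProdPi _)) := by
  funext a
  simp only [powProd, comp_apply, List.ofFn_add, List.prod_append]
  rfl

theorem bijective_powProd_append_iff (b : Fin m → G) (c : Fin k → G) :
    Bijective (powProd (Fin.append b c)) ↔
      Bijective fun p : (∀ i, Fin (orderOf (b i))) × (∀ j, Fin (orderOf (c j))) =>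
        powProd b p.1 * powProd c p.2 := by
  have hb : Fin.append b c ∘ Fin.castAdd k = b := funext (Fin.append_left b c)
  have hc : Fin.append b c ∘ Fin.natAdd m = c := funext (Fin.append_right b c)
  generalize Fin.append b c = d at hb hc ⊢
  subst hb hc
  rw [powProd_eq_comp_sumPiEquivProdPi, Equiv.bijective_comp]
  exact Iff.rfl

theorem Subgroup.IsComplement'.isGroupBasis_append {H K : Subgroup G} (h : IsComplement' H K)
    {b : Fin m → H} {c : Fin k → K} (hb : IsGroupBasis b) (hc : IsGroupBasis c) :
    IsGroupBasis (Fin.append (fun i => (b i : G)) fun j => (c j : G)) := by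
  refine ⟨fun i => ?_, ?_⟩
  · induction i using Fin.addCases with
    | left i => simpa using hb.1 i
    | right j => simpa using hc.1 j
  · change Bijective (powProd _)
    rw [bijective_powProd_append_iff]
    change Bijective fun p : _ × _ => powProd (fun i => H.subtype (b i)) p.1 *
      powProd (fun j => K.subtype (c j)) p.2
    rw [powProd_map_of_injective _ H.subtype_injective,
      powProd_map_of_injective _ K.subtype_injective]
    exact h.comp ((hb.2.prodMap hc.2).comp ((Equiv.bijective _).prodMap (Equiv.bijective _)))

theorem Subgroup.IsComplement'.hasGroupBasis {H K : Subgroup G} (h : IsComplement' H K)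
    (hH : HasGroupBasis H) (hK : HasGroupBasis K) : HasGroupBasis G :=
  let ⟨m, _, hb⟩ := hH
  let ⟨k, _, hc⟩ := hK
  ⟨m + k, _, h.isGroupBasis_append hb hc⟩

end Basis

section Hall

variable {G : Type*} [Group G]

theorem exists_normal_ne_bot_isMulCommutative [Group.IsSolvable G] [Nontrivial G] :
    ∃ A : Subgroup G, A.Normal ∧ A ≠ ⊥ ∧ IsMulCommutative A := by
  classical
  have hex : ∃ n, derivedSeries G n = ⊥ := Group.IsSolvable.solvable
  obtain ⟨j, hj⟩ : ∃ j, Nat.find hex = j + 1 :=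
    Nat.exists_eq_succ_of_ne_zero fun h =>
      top_ne_bot (α := Subgroup G) (by simpa [h] using Nat.find_spec hex)
  refine ⟨derivedSeries G j, derivedSeries_normal G j, Nat.find_min hex (by omega), ?_⟩
  rw [← commutator_self_eq_bot_iff, ← derivedSeries_succ, ← hj]
  exact Nat.find_spec hex

theorem exists_normal_ne_bot_isPGroup [Finite G] [Group.IsSolvable G] [Nontrivial G] :
    ∃ q, q.Prime ∧ ∃ N : Subgroup G, N.Normal ∧ N ≠ ⊥ ∧ IsPGroup q N := by
  obtain ⟨A, hA, hAbot, hAcomm⟩ := exists_normal_ne_bot_isMulCommutative (G := G)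
  obtain ⟨q, hq, hqA⟩ := Nat.exists_prime_and_dvd (A.one_lt_card_iff_ne_bot.2 hAbot).ne'
  have : Fact q.Prime := ⟨hq⟩
  obtain ⟨Q⟩ : Nonempty (Sylow q A) := inferInstance
  -- a normal Sylow subgroup of `A` is characteristic in `A`, hence normal in `G`
  have := Q.characteristic_of_normal inferInstance
  refine ⟨q, hq, (Q : Subgroup A).map A.subtype, inferInstance, ?_, Q.2.map _⟩
  rw [Ne, map_eq_bot_iff_of_injective _ A.subtype_injective]
  exact Q.ne_bot_of_dvd_card hqA

theorem QuotientGroup.card_comap_mk' [Finite G] (N : Subgroup G) [N.Normal]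
    (H : Subgroup (G ⧸ N)) :
    Nat.card (H.comap (QuotientGroup.mk' N)) = Nat.card H * Nat.card N := by
  have hindex : (H.comap (QuotientGroup.mk' N)).index = H.index :=
    index_comap_of_surjective _ (QuotientGroup.mk'_surjective N)
  refine Nat.eq_of_mul_eq_mul_right (Nat.pos_of_ne_zero H.index_ne_zero_of_finite) ?_
  rw [← hindex, card_mul_index, mul_right_comm, hindex, card_mul_index,
    ← card_eq_card_quotient_mul_card_subgroup]

theorem exists_subgroup_card_eq_of_coprime_quotient [Finite G] {N : Subgroup G} [N.Normal]
    (H : Subgroup (G ⧸ N)) (hcop : (Nat.card N).Coprime (Nat.card H)) :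
    ∃ L : Subgroup G, Nat.card L = Nat.card H := by
  set K := H.comap (QuotientGroup.mk' N)
  have hNK : N ≤ K := by
    simpa [K] using (QuotientGroup.ker_mk' N).ge.trans (MonoidHom.ker_le_comap _ H)
  have hcard : Nat.card (N.subgroupOf K) = Nat.card N :=
    Nat.card_congr (subgroupOfEquivOfLe hNK).toEquiv
  have hindex : (N.subgroupOf K).index = Nat.card H := by
    refine Nat.eq_of_mul_eq_mul_left (Nat.card_pos (α := N.subgroupOf K)) ?_
    rw [card_mul_index, QuotientGroup.card_comap_mk', hcard, mul_comm]
  obtain ⟨C, hC⟩ := exists_right_complement'_of_coprime (hcard ▸ hindex ▸ hcop)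
  refine ⟨C.map K.subtype, ?_⟩
  rw [card_map_of_injective K.subtype_injective, ← hindex]
  refine Nat.eq_of_mul_eq_mul_left (Nat.card_pos (α := N.subgroupOf K)) ?_
  rw [hC.card_mul_card, card_mul_index]

theorem exists_subgroup_card_eq_ordCompl [Finite G] [Group.IsSolvable G] {p : ℕ} (hp : p.Prime) :
    ∃ H : Subgroup G, Nat.card H = ordCompl[p] (Nat.card G) := by
  induction hn : Nat.card G using Nat.strong_induction_on generalizing G with
  | _ n ih =>
  subst hn
  by_cases hpG : p ∣ Nat.card G
  swap
  · exact ⟨⊤, by rw [card_top, Nat.factorization_eq_zero_of_not_dvd hpG, pow_zero, Nat.div_one]⟩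
  have : Nontrivial G := Finite.one_lt_card_iff_nontrivial.1 <|
    (Nat.le_of_dvd Nat.card_pos hpG).trans_lt' hp.one_lt
  obtain ⟨q, hq, N, hN, hNbot, hNq⟩ := exists_normal_ne_bot_isPGroup (G := G)
  have : Fact q.Prime := ⟨hq⟩
  obtain ⟨k, hk⟩ := IsPGroup.iff_card.1 hNq
  have hcard : Nat.card G = Nat.card (G ⧸ N) * Nat.card N :=
    card_eq_card_quotient_mul_card_subgroup N
  have hlt : Nat.card (G ⧸ N) < Nat.card G :=
    hcard ▸ lt_mul_of_one_lt_right Nat.card_pos (N.one_lt_card_iff_ne_bot.2 hNbot)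
  obtain ⟨H, hH⟩ := ih _ hlt (G := G ⧸ N) rfl
  rw [hcard, Nat.ordCompl_mul, ← hH, hk]
  rcases eq_or_ne q p with rfl | hqp
  · -- `N` is a normal Sylow subgroup, so Schur–Zassenhaus lifts `H` to `G`
    rw [Nat.ordCompl_self_pow hp, mul_one]
    refine exists_subgroup_card_eq_of_coprime_quotient H ?_
    rw [hk, hH]
    exact (Nat.coprime_ordCompl hp Nat.card_pos.ne').pow_left k
  · rw [(Nat.ordCompl_eq_self_iff_zero_or_not_dvd _ hp).2 (Or.inr fun h =>
      hqp ((Nat.prime_dvd_prime_iff_eq hp hq).1 (hp.dvd_of_dvd_pow h)).symm), ← hk]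
    exact ⟨_, QuotientGroup.card_comap_mk' N H⟩

end Hall

section Sylow

variable {G : Type*} [Group G] [Finite G]

theorem Sylow.isComplement'_of_card_eq_ordCompl {p : ℕ} [Fact p.Prime] (P : Sylow p G)
    {H : Subgroup G} (hH : Nat.card H = ordCompl[p] (Nat.card G)) : IsComplement' P H := by
  refine isComplement'_of_coprime ?_ ?_ <;> rw [P.card_eq_multiplicity, hH]
  · exact Nat.ordProj_mul_ordCompl_eq_self _ _
  · exact (Nat.coprime_ordCompl Fact.out Nat.card_pos.ne').pow_left _

theorem Sylow.hasGroupBasis_of_not_dvd_index {q : ℕ} [Fact q.Prime] {H : Subgroup G}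
    (hq : ¬q ∣ H.index) (hSyl : ∀ P : Sylow q G, HasGroupBasis P) (Q : Sylow q H) :
    HasGroupBasis Q := by
  have hQ : ¬q ∣ ((Q : Subgroup H).map H.subtype).index := by
    rw [index_map_subtype]
    exact Nat.Prime.not_dvd_mul Fact.out Q.not_dvd_index hq
  exact (hSyl ((Q.2.map H.subtype).toSylow hQ)).of_mulEquiv
    (equivMapOfInjective _ _ H.subtype_injective).symm

theorem hasGroupBasis_sylow_of_card_eq_ordCompl {p : ℕ} (hp : p.Prime) {H : Subgroup G}
    (hH : Nat.card H = ordCompl[p] (Nat.card G))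
    (hSyl : ∀ q : ℕ, q.Prime → ∀ P : Sylow q G, HasGroupBasis P) (q : ℕ) (hq : q.Prime)
    (Q : Sylow q H) : HasGroupBasis Q := by
  have : Fact q.Prime := ⟨hq⟩
  have hG : Nat.card G ≠ 0 := Nat.card_pos.ne'
  rcases eq_or_ne q p with rfl | hqp
  · have hQ : Nat.card Q = 1 := by
      rw [Q.card_eq_multiplicity, hH,
        Nat.factorization_eq_zero_of_not_dvd (Nat.not_dvd_ordCompl hp hG), pow_zero]
    have := (Nat.card_eq_one_iff_unique.1 hQ).1
    exact hasGroupBasis_of_subsingleton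
  · have hindex : H.index = ordProj[p] (Nat.card G) := by
      refine Nat.eq_of_mul_eq_mul_left (Nat.card_pos (α := H)) ?_
      rw [card_mul_index, hH, mul_comm, Nat.ordProj_mul_ordCompl_eq_self]
    refine Q.hasGroupBasis_of_not_dvd_index ?_ (hSyl q hq)
    rw [hindex]
    exact fun h => hqp ((Nat.prime_dvd_prime_iff_eq hq hp).1 (hq.dvd_of_dvd_pow h))

end Sylow

/-- If `G` is a finite solvable group all of whose Sylow subgroups have bases,
then `G` has a basis. -/
theorem hasGroupBasis_of_solvable {G : Type*} [Group G] [Finite G] [Group.IsSolvable G]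
    (hSyl : ∀ p : ℕ, p.Prime → ∀ P : Sylow p G, HasGroupBasis (P : Subgroup G)) :
    HasGroupBasis G := by
  induction hn : Nat.card G using Nat.strong_induction_on generalizing G with
  | _ n ih =>
  subst hn
  rcases subsingleton_or_nontrivial G with hG | hG
  · exact hasGroupBasis_of_subsingleton
  obtain ⟨p, hp, hpG⟩ := Nat.exists_prime_and_dvd (Finite.one_lt_card (α := G)).ne'
  have : Fact p.Prime := ⟨hp⟩
  obtain ⟨H, hH⟩ := exists_subgroup_card_eq_ordCompl (G := G) hp
  obtain ⟨P⟩ : Nonempty (Sylow p G) := inferInstance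
  have hPH := P.isComplement'_of_card_eq_ordCompl hH
  have hlt : Nat.card H < Nat.card G := by
    rw [← hPH.card_mul_card]
    exact lt_mul_of_one_lt_left Nat.card_pos
      ((P : Subgroup G).one_lt_card_iff_ne_bot.2 (P.ne_bot_of_dvd_card hpG))
  exact hPH.hasGroupBasis (hSyl p hp P)
    (ih _ hlt (hasGroupBasis_sylow_of_card_eq_ordCompl hp hH hSyl) rfl)
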